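/- If (ρ̄, φ̄) is a classical solution of the stationary problem, then ρ̄(0) = ρ₋, φ̄(x) = F(ρ̄(x)) + φ₊ for all x ≥ 0, and for all x > 0: ρ̄'(x) = −√(G(ρ̄(x)))/F'(ρ̄(x)) in the case φ₋ > φ₊, while ρ̄'(x) = +√(G(ρ̄(x)))/F'(ρ̄(x)) in the case φ₋ < φ₊. -/

import Mathlib

open MeasureTheory Set Filter Topology

noncomputable section

/-- `F(s) = ∫_{ρ₊}^s p'(τ)/(μ τ) dτ`. -/
def Ffun (p : ℝ → ℝ) (μ ρp s : ℝ) : ℝ :=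
  ∫ τ in ρp..s, deriv p τ / (μ * τ)

/-- `H(s) = b F(s) + b φ₊ - a s`. -/
def Hfun (p : ℝ → ℝ) (μ a b ρp φp s : ℝ) : ℝ :=
  b * Ffun p μ ρp s + b * φp - a * s

/-- `G(s) = ∫_{ρ₊}^s 2 F'(τ) H(τ) dτ`. -/
def Gfun (p : ℝ → ℝ) (μ a b ρp φp s : ℝ) : ℝ :=
  ∫ τ in ρp..s, 2 * (deriv p τ / (μ * τ)) * Hfun p μ a b ρp φp τ

/-- The structural condition `φ₋ - φ₊ + ∫₀^{ρ₊} p'(s)/(μ s) ds > 0`. -/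
def CondPlus (p : ℝ → ℝ) (μ ρp φp φm : ℝ) : Prop :=
  ¬ IntegrableOn (fun s => deriv p s / (μ * s)) (Set.Ioo 0 ρp) ∨
    0 < φm - φp + ∫ s in Set.Ioo 0 ρp, deriv p s / (μ * s)

/-- Classical solution of the stationary problem on `ℝ₊ = (0,∞)`. -/
def IsStatSol (p : ℝ → ℝ) (μ a b ρp φp φm : ℝ) (ρb φb : ℝ → ℝ) : Prop :=
  ContDiffOn ℝ 1 ρb (Set.Ici 0) ∧
  ContDiffOn ℝ 2 φb (Set.Ici 0) ∧
  (∀ x : ℝ, 0 ≤ x → 0 < ρb x) ∧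
  (∀ x : ℝ, 0 < x → deriv (fun y => p (ρb y)) x = μ * ρb x * deriv φb x) ∧
  (∀ x : ℝ, 0 < x → deriv (deriv φb) x + a * ρb x - b * φb x = 0) ∧
  φb 0 = φm ∧
  Tendsto ρb atTop (nhds ρp) ∧
  Tendsto φb atTop (nhds φp)

/-!
The first equation says `φ̄' = F'(ρ̄) ρ̄'`, so `φ̄ - F(ρ̄)` is constant, equal to its limit `φ₊`;
injectivity of `F` then gives `ρ̄(0) = ρ₋`. Substituting into the second equation gives
`φ̄'' = H(ρ̄)`, hence `(φ̄')² - G(ρ̄)` is constant, and it vanishes at `+∞` because `φ̄'' → 0`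
forces `φ̄' → 0`. As `G > 0` away from `ρ₊`, `φ̄'` can only vanish where `ρ̄ = ρ₊`; there `φ̄ - φ₊` has a
double zero, and since `|H(s)| ≤ b |F(s)|` Grönwall's inequality makes `φ̄ - φ₊` vanish on the
whole of `(0, x]`, contradicting `φ̄(0) = φ₋ ≠ φ₊`. So `φ̄'` has a constant sign (Darboux), read
off from `φ̄(0) = φ₋` and `φ̄(+∞) = φ₊`, and `ρ̄' = φ̄' / F'(ρ̄) = ∓ √G(ρ̄) / F'(ρ̄)`.
-/

theorem hasDerivAt_integral_of_continuousOn {g : ℝ → ℝ} {U : Set ℝ} {c s : ℝ}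
    (hU : IsOpen U) (hg : ContinuousOn g U) (hcs : uIcc c s ⊆ U) :
    HasDerivAt (fun t => ∫ τ in c..t, g τ) (g s) s :=
  intervalIntegral.integral_hasDerivAt_right (hg.mono hcs).intervalIntegrable
    (hg.stronglyMeasurableAtFilter hU s (hcs right_mem_uIcc))
    (hg.continuousAt (hU.mem_nhds (hcs right_mem_uIcc)))

theorem eqOn_Ioi_of_hasDerivAt_zero_of_tendsto {f : ℝ → ℝ} {c L : ℝ}
    (hf : ∀ x ∈ Ioi c, HasDerivAt f 0 x) (hL : Tendsto f atTop (𝓝 L)) :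
    ∀ x ∈ Ioi c, f x = L := by
  intro x hx
  have hconst : ∀ y ∈ Ioi c, f y = f x := fun y hy =>
    isOpen_Ioi.is_const_of_deriv_eq_zero isPreconnected_Ioi
      (fun z hz => (hf z hz).differentiableAt.differentiableWithinAt)
      (fun z hz => (hf z hz).deriv) hy hx
  refine tendsto_nhds_unique (tendsto_const_nhds.congr' ?_) hL
  filter_upwards [eventually_gt_atTop c] with y hy using (hconst y hy).symm

theorem exists_eq_sub_sub_mul_deriv {f f' f'' : ℝ → ℝ} {x : ℝ}
    (hf : ∀ y ∈ Icc x (x + 1), HasDerivAt f (f' y) y)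
    (hf' : ∀ y ∈ Icc x (x + 1), HasDerivAt f' (f'' y) y) :
    ∃ d ∈ Icc x (x + 1), ∃ θ ∈ Icc (0 : ℝ) 1, f' x = f (x + 1) - f x - θ * f'' d := by
  obtain ⟨y, hy, hfy⟩ := exists_hasDerivAt_eq_slope f f' (lt_add_one x)
    (fun z hz => (hf z hz).continuousAt.continuousWithinAt)
    (fun z hz => hf z (Ioo_subset_Icc_self hz))
  have hyx : Icc x y ⊆ Icc x (x + 1) := Icc_subset_Icc_right hy.2.le
  obtain ⟨d, hd, hf'd⟩ := exists_hasDerivAt_eq_slope f' f'' hy.1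
    (fun z hz => (hf' z (hyx hz)).continuousAt.continuousWithinAt)
    (fun z hz => hf' z (hyx (Ioo_subset_Icc_self hz)))
  refine ⟨d, hyx (Ioo_subset_Icc_self hd), y - x, ⟨by linarith [hy.1], by linarith [hy.2]⟩, ?_⟩
  rw [add_sub_cancel_left, div_one] at hfy
  rw [hf'd, mul_div_cancel₀ _ (sub_ne_zero.2 hy.1.ne'), ← hfy]
  ring

theorem tendsto_deriv_atTop_zero {f f' f'' : ℝ → ℝ} {c L : ℝ}
    (hf : ∀ x ∈ Ioi c, HasDerivAt f (f' x) x) (hf' : ∀ x ∈ Ioi c, HasDerivAt f' (f'' x) x)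
    (hL : Tendsto f atTop (𝓝 L)) (h0 : Tendsto f'' atTop (𝓝 0)) :
    Tendsto f' atTop (𝓝 0) := by
  have hstep : Tendsto (fun x => f (x + 1) - f x) atTop (𝓝 0) := by
    simpa using (hL.comp (tendsto_atTop_add_const_right _ 1 tendsto_id)).sub hL
  rw [Metric.tendsto_atTop] at hstep h0 ⊢
  intro ε hε
  obtain ⟨N₁, hN₁⟩ := hstep (ε / 2) (half_pos hε)
  obtain ⟨N₂, hN₂⟩ := h0 (ε / 2) (half_pos hε)
  refine ⟨max (max N₁ N₂) (c + 1), fun x hx => ?_⟩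
  simp only [max_le_iff] at hx
  have hsub : Icc x (x + 1) ⊆ Ioi c := fun y hy => by simp only [mem_Ioi]; linarith [hy.1]
  obtain ⟨d, hd, θ, hθ, hrepr⟩ :=
    exists_eq_sub_sub_mul_deriv (fun y hy => hf y (hsub hy)) (fun y hy => hf' y (hsub hy))
  have h1 := hN₁ x hx.1.1
  have h2 := hN₂ d (hx.1.2.trans hd.1)
  rw [Real.dist_eq, sub_zero] at h1 h2 ⊢
  rw [hrepr]
  have hθd : |θ * f'' d| ≤ |f'' d| := by
    rw [abs_mul, abs_of_nonneg hθ.1]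
    exact mul_le_of_le_one_left (abs_nonneg _) hθ.2
  linarith [abs_sub (f (x + 1) - f x) (θ * f'' d)]

theorem deriv_neg_of_tendsto_lt {f f' : ℝ → ℝ} {a L : ℝ} (hf : ContinuousOn f (Ici a))
    (hf' : ∀ x ∈ Ioi a, HasDerivAt f (f' x) x) (hne : ∀ x ∈ Ioi a, f' x ≠ 0)
    (hL : Tendsto f atTop (𝓝 L)) (hlt : L < f a) : ∀ x ∈ Ioi a, f' x < 0 := by
  by_contra! ⟨x₀, hx₀, hpos⟩
  have hpos₀ : 0 < f' x₀ := hpos.lt_of_ne (hne x₀ hx₀).symm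
  -- Darboux: the image of `f'` is an interval avoiding `0`
  have hconn : OrdConnected (f' '' Ioi a) :=
    ordConnected_Ioi.image_hasDerivWithinAt fun x hx => (hf' x hx).hasDerivWithinAt
  have hall : ∀ x ∈ Ioi a, 0 < f' x := by
    intro x hx
    by_contra! hle
    obtain ⟨y, hy, hy0⟩ := hconn.out (mem_image_of_mem f' hx) (mem_image_of_mem f' hx₀)
      ⟨hle, hpos₀.le⟩
    exact hne y hy hy0
  have hmono : StrictMonoOn f (Ici a) :=
    strictMonoOn_of_hasDerivWithinAt_pos (convex_Ici a) hf
      (fun x hx => (hf' x (by rwa [interior_Ici] at hx)).hasDerivWithinAt)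
      (fun x hx => hall x (by rwa [interior_Ici] at hx))
  have hlim : f (a + 1) ≤ L := by
    refine ge_of_tendsto hL ?_
    filter_upwards [eventually_ge_atTop (a + 1)] with y hy
    exact hmono.monotoneOn (by simp) (by simp; linarith) hy
  linarith [hmono self_mem_Ici (by simp : a + 1 ∈ Ici a) (lt_add_one a)]

theorem deriv_pos_of_tendsto_gt {f f' : ℝ → ℝ} {a L : ℝ} (hf : ContinuousOn f (Ici a))
    (hf' : ∀ x ∈ Ioi a, HasDerivAt f (f' x) x) (hne : ∀ x ∈ Ioi a, f' x ≠ 0)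
    (hL : Tendsto f atTop (𝓝 L)) (hgt : f a < L) : ∀ x ∈ Ioi a, 0 < f' x := fun x hx =>
  neg_neg_iff_pos.1 <| deriv_neg_of_tendsto_lt hf.neg (fun y hy => (hf' y hy).neg)
    (fun y hy => neg_ne_zero.2 (hne y hy)) hL.neg (neg_lt_neg hgt) x hx

theorem eq_of_continuousWithinAt_of_eventually_eq {f : ℝ → ℝ} {a L : ℝ}
    (hf : ContinuousWithinAt f (Ici a) a) (h : ∀ᶠ x in 𝓝[>] a, f x = L) : f a = L :=
  tendsto_nhds_unique (hf.mono Ioi_subset_Ici_self)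
    (tendsto_const_nhds.congr' (h.mono fun _ hx => hx.symm))

theorem eq_zero_of_abs_deriv_deriv_le_of_eq_zero_right {ψ ψ' ψ'' : ℝ → ℝ} {K a b : ℝ}
    (hψ : ∀ x ∈ Icc a b, HasDerivAt ψ (ψ' x) x) (hψ' : ∀ x ∈ Icc a b, HasDerivAt ψ' (ψ'' x) x)
    (bound : ∀ x ∈ Icc a b, |ψ'' x| ≤ K * |ψ x|) (hb : ψ b = 0) (hb' : ψ' b = 0) :
    ∀ x ∈ Icc a b, ψ x = 0 := by
  -- Grönwall propagates forward in time, so apply it to the reflected phase-space curve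
  have hrefl : ∀ t ∈ Icc (-b) (-a), -t ∈ Icc a b := fun t ht =>
    ⟨by linarith [ht.2], by linarith [ht.1]⟩
  have hV : ∀ t ∈ Icc (-b) (-a),
      HasDerivAt (fun s => (ψ (-s), ψ' (-s))) (-ψ' (-t), -ψ'' (-t)) t := by
    intro t ht
    have h1 := (hψ _ (hrefl t ht)).comp t (hasDerivAt_neg t)
    have h2 := (hψ' _ (hrefl t ht)).comp t (hasDerivAt_neg t)
    simpa using h1.prodMk h2
  have hzero := eq_zero_of_abs_deriv_le_mul_abs_self_of_eq_zero_right (K := max 1 K)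
    (fun t ht => (hV t ht).continuousAt.continuousWithinAt)
    (fun t ht => (hV t (Ico_subset_Icc_self ht)).hasDerivWithinAt)
    (by simp [hb, hb']) ?_
  · intro x hx
    have := hzero (-x) ⟨by linarith [hx.2], by linarith [hx.1]⟩
    simpa using congrArg Prod.fst this
  · intro t ht
    have hx := hrefl t (Ico_subset_Icc_self ht)
    simp only [Prod.norm_def, norm_neg, Real.norm_eq_abs]
    refine max_le ?_ ?_
    · calc |ψ' (-t)| ≤ 1 * max |ψ (-t)| |ψ' (-t)| := by rw [one_mul]; exact le_max_right _ _
        _ ≤ max 1 K * max |ψ (-t)| |ψ' (-t)| := by gcongr; exact le_max_left _ _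
    · calc |ψ'' (-t)| ≤ K * |ψ (-t)| := bound _ hx
        _ ≤ max 1 K * max |ψ (-t)| |ψ' (-t)| := by
          gcongr
          · exact le_max_right _ _
          · exact le_max_left _ _

section Profiles

variable {p : ℝ → ℝ} {μ a b ρp φp s : ℝ}

theorem continuousOn_deriv_div (hp : ContDiffOn ℝ 1 p (Ioi 0)) (hμ : μ ≠ 0) :
    ContinuousOn (fun τ => deriv p τ / (μ * τ)) (Ioi 0) :=
  (hp.continuousOn_deriv_of_isOpen isOpen_Ioi le_rfl).div (continuousOn_const.mul continuousOn_id)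
    fun _ hτ => mul_ne_zero hμ (ne_of_gt hτ)

theorem hasDerivAt_Ffun (hp : ContDiffOn ℝ 1 p (Ioi 0)) (hμ : μ ≠ 0) (hρp : 0 < ρp)
    (hs : 0 < s) : HasDerivAt (Ffun p μ ρp) (deriv p s / (μ * s)) s :=
  hasDerivAt_integral_of_continuousOn isOpen_Ioi (continuousOn_deriv_div hp hμ)
    (ordConnected_Ioi.uIcc_subset hρp hs)

theorem hasDerivAt_Hfun (hp : ContDiffOn ℝ 1 p (Ioi 0)) (hμ : μ ≠ 0) (hρp : 0 < ρp)
    (hs : 0 < s) : HasDerivAt (Hfun p μ a b ρp φp) (b * (deriv p s / (μ * s)) - a) s := by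
  have h := (((hasDerivAt_Ffun hp hμ hρp hs).const_mul b).add_const (b * φp)).sub
    ((hasDerivAt_id' s).const_mul a)
  rw [mul_one] at h
  exact h

theorem continuousOn_Gfun_integrand (hp : ContDiffOn ℝ 1 p (Ioi 0)) (hμ : μ ≠ 0)
    (hρp : 0 < ρp) :
    ContinuousOn (fun τ => 2 * (deriv p τ / (μ * τ)) * Hfun p μ a b ρp φp τ) (Ioi 0) :=
  (continuousOn_const.mul (continuousOn_deriv_div hp hμ)).mul fun _ hτ =>
    (hasDerivAt_Hfun hp hμ hρp hτ).continuousAt.continuousWithinAt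

theorem hasDerivAt_Gfun (hp : ContDiffOn ℝ 1 p (Ioi 0)) (hμ : μ ≠ 0) (hρp : 0 < ρp)
    (hs : 0 < s) : HasDerivAt (Gfun p μ a b ρp φp)
      (2 * (deriv p s / (μ * s)) * Hfun p μ a b ρp φp s) s :=
  hasDerivAt_integral_of_continuousOn isOpen_Ioi (continuousOn_Gfun_integrand hp hμ hρp)
    (ordConnected_Ioi.uIcc_subset hρp hs)

theorem Ffun_self : Ffun p μ ρp ρp = 0 := intervalIntegral.integral_same

theorem Gfun_self : Gfun p μ a b ρp φp ρp = 0 := intervalIntegral.integral_same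

theorem Hfun_self (hcomp : a * ρp = b * φp) : Hfun p μ a b ρp φp ρp = 0 := by
  simp [Hfun, Ffun_self, hcomp]

theorem Hfun_eq (hcomp : a * ρp = b * φp) :
    Hfun p μ a b ρp φp s = b * Ffun p μ ρp s - a * (s - ρp) := by
  simp only [Hfun]; linarith

theorem lt_mul_deriv_div (hμ : 0 < μ) (hb : 0 < b)
    (hp' : ∀ ρ : ℝ, 0 < ρ → a * μ / b * ρ < deriv p ρ) (hs : 0 < s) :
    a < b * (deriv p s / (μ * s)) := by
  have := hp' s hs
  rw [mul_div_assoc', lt_div_iff₀ (mul_pos hμ hs)]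
  rw [div_mul_eq_mul_div, div_lt_iff₀ hb] at this
  linarith

theorem deriv_div_pos (hμ : 0 < μ) (ha : 0 < a) (hb : 0 < b)
    (hp' : ∀ ρ : ℝ, 0 < ρ → a * μ / b * ρ < deriv p ρ) (hs : 0 < s) :
    0 < deriv p s / (μ * s) :=
  pos_of_mul_pos_right (ha.trans (lt_mul_deriv_div hμ hb hp' hs)) hb.le

theorem Hfun_strictMonoOn (hp : ContDiffOn ℝ 1 p (Ioi 0)) (hμ : 0 < μ) (hb : 0 < b)
    (hp' : ∀ ρ : ℝ, 0 < ρ → a * μ / b * ρ < deriv p ρ) (hρp : 0 < ρp) :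
    StrictMonoOn (Hfun p μ a b ρp φp) (Ioi 0) :=
  strictMonoOn_of_hasDerivWithinAt_pos (convex_Ioi 0)
    (fun τ hτ => (hasDerivAt_Hfun hp hμ.ne' hρp hτ).continuousAt.continuousWithinAt)
    (fun τ hτ => (hasDerivAt_Hfun hp hμ.ne' hρp (by rwa [interior_Ioi] at hτ)).hasDerivWithinAt)
    (fun τ hτ => sub_pos.2 (lt_mul_deriv_div hμ hb hp' (by rwa [interior_Ioi] at hτ)))

theorem abs_Hfun_le (hp : ContDiffOn ℝ 1 p (Ioi 0)) (hμ : 0 < μ) (ha : 0 < a) (hb : 0 < b)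
    (hp' : ∀ ρ : ℝ, 0 < ρ → a * μ / b * ρ < deriv p ρ) (hρp : 0 < ρp)
    (hcomp : a * ρp = b * φp) (hs : 0 < s) :
    |Hfun p μ a b ρp φp s| ≤ b * |Ffun p μ ρp s| := by
  have hmono := (Hfun_strictMonoOn (φp := φp) hp hμ hb hp' hρp).monotoneOn
  -- `H(s)` has the sign of `s - ρp`, while `H(s) - b F(s) = -a (s - ρp)` has the opposite one
  have hH := Hfun_eq (p := p) (μ := μ) (s := s) hcomp
  rw [← abs_of_pos hb, ← abs_mul, abs_of_pos hb]
  rcases le_total s ρp with hle | hle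
  · have := hmono hs hρp hle
    rw [Hfun_self hcomp] at this
    exact abs_le_abs_of_nonpos this (by nlinarith)
  · have := hmono hρp hs hle
    rw [Hfun_self hcomp] at this
    exact abs_le_abs_of_nonneg this (by nlinarith)

theorem Gfun_pos (hp : ContDiffOn ℝ 1 p (Ioi 0)) (hμ : 0 < μ) (ha : 0 < a) (hb : 0 < b)
    (hp' : ∀ ρ : ℝ, 0 < ρ → a * μ / b * ρ < deriv p ρ) (hρp : 0 < ρp)
    (hcomp : a * ρp = b * φp) (hs : 0 < s) (hne : s ≠ ρp) :
    0 < Gfun p μ a b ρp φp s := by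
  have hmono := Hfun_strictMonoOn (φp := φp) hp hμ hb hp' hρp
  have hint : IntervalIntegrable (fun τ => 2 * (deriv p τ / (μ * τ)) * Hfun p μ a b ρp φp τ)
      volume s ρp :=
    ((continuousOn_Gfun_integrand hp hμ.ne' hρp).mono
      (ordConnected_Ioi.uIcc_subset hs hρp)).intervalIntegrable
  rcases hne.lt_or_gt with hlt | hgt
  · rw [Gfun, intervalIntegral.integral_symm, ← intervalIntegral.integral_neg]
    refine intervalIntegral.intervalIntegral_pos_of_pos_on hint.neg (fun τ hτ => ?_) hlt
    have hτ0 : 0 < τ := hs.trans hτ.1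
    have hHτ := hmono hτ0 hρp hτ.2
    rw [Hfun_self hcomp] at hHτ
    nlinarith [deriv_div_pos hμ ha hb hp' hτ0]
  · refine intervalIntegral.intervalIntegral_pos_of_pos_on hint.symm (fun τ hτ => ?_) hgt
    have hτ0 : 0 < τ := hρp.trans hτ.1
    have hHτ := hmono hρp hτ0 hτ.1
    rw [Hfun_self hcomp] at hHτ
    have := deriv_div_pos hμ ha hb hp' hτ0
    positivity

theorem Ffun_strictMonoOn (hp : ContDiffOn ℝ 1 p (Ioi 0)) (hμ : 0 < μ) (ha : 0 < a) (hb : 0 < b)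
    (hp' : ∀ ρ : ℝ, 0 < ρ → a * μ / b * ρ < deriv p ρ) (hρp : 0 < ρp) :
    StrictMonoOn (Ffun p μ ρp) (Ioi 0) :=
  strictMonoOn_of_hasDerivWithinAt_pos (convex_Ioi 0)
    (fun τ hτ => (hasDerivAt_Ffun hp hμ.ne' hρp hτ).continuousAt.continuousWithinAt)
    (fun τ hτ => (hasDerivAt_Ffun hp hμ.ne' hρp (by rwa [interior_Ioi] at hτ)).hasDerivWithinAt)
    (fun τ hτ => deriv_div_pos hμ ha hb hp' (by rwa [interior_Ioi] at hτ))

end Profiles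

namespace IsStatSol

variable {p : ℝ → ℝ} {μ a b ρp φp φm : ℝ} {ρb φb : ℝ → ℝ} {x : ℝ}

theorem rho_pos (hsol : IsStatSol p μ a b ρp φp φm ρb φb) (hx : 0 ≤ x) : 0 < ρb x :=
  hsol.2.2.1 x hx

theorem phi_zero (hsol : IsStatSol p μ a b ρp φp φm ρb φb) : φb 0 = φm :=
  hsol.2.2.2.2.2.1

theorem tendsto_rho (hsol : IsStatSol p μ a b ρp φp φm ρb φb) : Tendsto ρb atTop (𝓝 ρp) :=
  hsol.2.2.2.2.2.2.1

theorem tendsto_phi (hsol : IsStatSol p μ a b ρp φp φm ρb φb) : Tendsto φb atTop (𝓝 φp) :=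
  hsol.2.2.2.2.2.2.2

theorem hasDerivAt_rho (hsol : IsStatSol p μ a b ρp φp φm ρb φb) (hx : 0 < x) :
    HasDerivAt ρb (deriv ρb x) x :=
  ((hsol.1.differentiableOn one_ne_zero x hx.le).differentiableAt (Ici_mem_nhds hx)).hasDerivAt

theorem hasDerivAt_phi (hsol : IsStatSol p μ a b ρp φp φm ρb φb) (hx : 0 < x) :
    HasDerivAt φb (deriv φb x) x :=
  ((hsol.2.1.differentiableOn two_ne_zero x hx.le).differentiableAt (Ici_mem_nhds hx)).hasDerivAt

theorem hasDerivAt_deriv_phi (hsol : IsStatSol p μ a b ρp φp φm ρb φb) (hx : 0 < x) :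
    HasDerivAt (deriv φb) (deriv (deriv φb) x) x := by
  have h : ContDiffOn ℝ 1 (deriv φb) (Ioi 0) :=
    (hsol.2.1.mono Ioi_subset_Ici_self).deriv_of_isOpen isOpen_Ioi (by norm_num)
  exact ((h.differentiableOn one_ne_zero x hx).differentiableAt (Ioi_mem_nhds hx)).hasDerivAt

theorem deriv_phi_eq (hp : ContDiffOn ℝ 1 p (Ioi 0)) (hμ : μ ≠ 0)
    (hsol : IsStatSol p μ a b ρp φp φm ρb φb) (hx : 0 < x) :
    deriv φb x = deriv p (ρb x) / (μ * ρb x) * deriv ρb x := by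
  have hρx := hsol.rho_pos hx.le
  have hchain : HasDerivAt (fun y => p (ρb y)) (deriv p (ρb x) * deriv ρb x) x :=
    ((hp.differentiableOn one_ne_zero _ hρx).differentiableAt
      (Ioi_mem_nhds hρx)).hasDerivAt.comp x (hsol.hasDerivAt_rho hx)
  have hode := hsol.2.2.2.1 x hx
  rw [hchain.deriv] at hode
  rw [div_mul_eq_mul_div, eq_div_iff (mul_ne_zero hμ hρx.ne'), hode]
  ring

theorem phi_eq_Ffun_add (hp : ContDiffOn ℝ 1 p (Ioi 0)) (hμ : μ ≠ 0) (hρp : 0 < ρp)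
    (hsol : IsStatSol p μ a b ρp φp φm ρb φb) (hx : 0 ≤ x) :
    φb x = Ffun p μ ρp (ρb x) + φp := by
  set D : ℝ → ℝ := fun y => φb y - Ffun p μ ρp (ρb y)
  have hD' : ∀ y ∈ Ioi (0 : ℝ), HasDerivAt D 0 y := fun y hy => by
    have hF := (hasDerivAt_Ffun hp hμ hρp (hsol.rho_pos (le_of_lt hy))).comp y
      (hsol.hasDerivAt_rho hy)
    rw [← hsol.deriv_phi_eq hp hμ hy] at hF
    have h := (hsol.hasDerivAt_phi hy).sub hF
    rwa [sub_self] at h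
  have hFρ : Tendsto (fun y => Ffun p μ ρp (ρb y)) atTop (𝓝 0) := by
    have h := (hasDerivAt_Ffun hp hμ hρp hρp).continuousAt.tendsto.comp hsol.tendsto_rho
    rwa [Ffun_self] at h
  have hD : ∀ y ∈ Ioi (0 : ℝ), D y = φp := eqOn_Ioi_of_hasDerivAt_zero_of_tendsto hD'
    (by simpa using hsol.tendsto_phi.sub hFρ)
  suffices D x = φp by simp only [D] at this; linarith
  rcases hx.eq_or_lt with rfl | hx
  · refine eq_of_continuousWithinAt_of_eventually_eq ?_ (eventually_mem_nhdsWithin.mono hD)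
    exact (hsol.2.1.continuousOn 0 self_mem_Ici).sub
      ((hasDerivAt_Ffun hp hμ hρp (hsol.rho_pos le_rfl)).continuousAt.comp_continuousWithinAt
        (hsol.1.continuousOn 0 self_mem_Ici))
  · exact hD x hx

theorem rho_zero (hp : ContDiffOn ℝ 1 p (Ioi 0)) (hμ : 0 < μ) (ha : 0 < a) (hb : 0 < b)
    (hp' : ∀ ρ : ℝ, 0 < ρ → a * μ / b * ρ < deriv p ρ) (hρp : 0 < ρp) {ρm : ℝ} (hρm : 0 < ρm)
    (hFρm : Ffun p μ ρp ρm = φm - φp) (hsol : IsStatSol p μ a b ρp φp φm ρb φb) :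
    ρb 0 = ρm := by
  have h0 := hsol.phi_eq_Ffun_add hp hμ.ne' hρp le_rfl
  rw [hsol.phi_zero] at h0
  exact (Ffun_strictMonoOn hp hμ ha hb hp' hρp).injOn (hsol.rho_pos le_rfl) hρm
    (by rw [hFρm]; linarith)

theorem hasDerivAt_deriv_phi_Hfun (hp : ContDiffOn ℝ 1 p (Ioi 0)) (hμ : μ ≠ 0) (hρp : 0 < ρp)
    (hsol : IsStatSol p μ a b ρp φp φm ρb φb) (hx : 0 < x) :
    HasDerivAt (deriv φb) (Hfun p μ a b ρp φp (ρb x)) x := by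
  convert hsol.hasDerivAt_deriv_phi hx using 1
  have hode := hsol.2.2.2.2.1 x hx
  rw [hsol.phi_eq_Ffun_add hp hμ hρp hx.le] at hode
  simp only [Hfun]
  linarith

theorem tendsto_deriv_phi (hcomp : a * ρp = b * φp) (hsol : IsStatSol p μ a b ρp φp φm ρb φb) :
    Tendsto (deriv φb) atTop (𝓝 0) := by
  refine tendsto_deriv_atTop_zero (fun y hy => hsol.hasDerivAt_phi hy)
    (fun y hy => hsol.hasDerivAt_deriv_phi hy) hsol.tendsto_phi ?_
  have h := (hsol.tendsto_phi.const_mul b).sub (hsol.tendsto_rho.const_mul a)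
  rw [← hcomp, sub_self] at h
  refine h.congr' ?_
  filter_upwards [eventually_gt_atTop 0] with y hy
  linarith [hsol.2.2.2.2.1 y hy]

theorem deriv_phi_sq (hp : ContDiffOn ℝ 1 p (Ioi 0)) (hμ : μ ≠ 0) (hρp : 0 < ρp)
    (hcomp : a * ρp = b * φp) (hsol : IsStatSol p μ a b ρp φp φm ρb φb) (hx : 0 < x) :
    deriv φb x ^ 2 = Gfun p μ a b ρp φp (ρb x) := by
  set q : ℝ → ℝ := fun y => deriv φb y ^ 2 - Gfun p μ a b ρp φp (ρb y)
  have hq' : ∀ y ∈ Ioi (0 : ℝ), HasDerivAt q 0 y := fun y hy => by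
    have h1 := (hsol.hasDerivAt_deriv_phi_Hfun hp hμ hρp hy).pow 2
    have h2 := (hasDerivAt_Gfun (a := a) (b := b) (φp := φp) hp hμ hρp
      (hsol.rho_pos (le_of_lt hy))).comp y (hsol.hasDerivAt_rho hy)
    rw [hsol.deriv_phi_eq hp hμ hy] at h1
    exact (h1.sub h2).congr_deriv (by norm_num; ring)
  have hG : Tendsto (fun y => Gfun p μ a b ρp φp (ρb y)) atTop (𝓝 0) := by
    have h := (hasDerivAt_Gfun (a := a) (b := b) (φp := φp) hp hμ hρp
      hρp).continuousAt.tendsto.comp hsol.tendsto_rho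
    rwa [Gfun_self] at h
  have hq := eqOn_Ioi_of_hasDerivAt_zero_of_tendsto hq'
    (by simpa using ((hsol.tendsto_deriv_phi hcomp).pow 2).sub hG) x hx
  simp only [q] at hq
  linarith

theorem deriv_phi_ne_zero (hp : ContDiffOn ℝ 1 p (Ioi 0)) (hμ : 0 < μ) (ha : 0 < a)
    (hb : 0 < b) (hp' : ∀ ρ : ℝ, 0 < ρ → a * μ / b * ρ < deriv p ρ) (hρp : 0 < ρp)
    (hcomp : a * ρp = b * φp) (hne : φm ≠ φp) (hsol : IsStatSol p μ a b ρp φp φm ρb φb)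
    (hx : 0 < x) : deriv φb x ≠ 0 := by
  intro hx0
  have hρx : ρb x = ρp := by
    by_contra hρx
    have hG := Gfun_pos hp hμ ha hb hp' hρp hcomp (hsol.rho_pos hx.le) hρx
    rw [← hsol.deriv_phi_sq hp hμ.ne' hρp hcomp hx, hx0] at hG
    simp at hG
  -- `ψ = φb - φp` solves `ψ'' = H(ρb)` with `|H(ρb)| ≤ b |F(ρb)| = b |ψ|` and has a double
  -- zero at `x`
  have hψ : ∀ δ ∈ Ioc (0 : ℝ) x, φb δ - φp = 0 := fun δ hδ =>
    eq_zero_of_abs_deriv_deriv_le_of_eq_zero_right (ψ := fun y => φb y - φp) (K := b)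
      (fun y hy => (hsol.hasDerivAt_phi (hδ.1.trans_le hy.1)).sub_const φp)
      (fun y hy => hsol.hasDerivAt_deriv_phi_Hfun hp hμ.ne' hρp (hδ.1.trans_le hy.1))
      (fun y hy => by
        have hy0 := hδ.1.trans_le hy.1
        rw [hsol.phi_eq_Ffun_add hp hμ.ne' hρp hy0.le, add_sub_cancel_right]
        exact abs_Hfun_le hp hμ ha hb hp' hρp hcomp (hsol.rho_pos hy0.le))
      (by rw [hsol.phi_eq_Ffun_add hp hμ.ne' hρp hx.le, hρx, Ffun_self]; ring) hx0
      δ ⟨le_rfl, hδ.2⟩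
  have h0 : φb 0 - φp = 0 := eq_of_continuousWithinAt_of_eventually_eq (f := fun y => φb y - φp)
    ((hsol.2.1.continuousOn 0 self_mem_Ici).sub continuousWithinAt_const)
    (mem_of_superset (Ioc_mem_nhdsGT hx) hψ)
  exact hne (by linarith [hsol.phi_zero])

theorem deriv_phi_neg (hp : ContDiffOn ℝ 1 p (Ioi 0)) (hμ : 0 < μ) (ha : 0 < a)
    (hb : 0 < b) (hp' : ∀ ρ : ℝ, 0 < ρ → a * μ / b * ρ < deriv p ρ) (hρp : 0 < ρp)
    (hcomp : a * ρp = b * φp) (hlt : φp < φm) (hsol : IsStatSol p μ a b ρp φp φm ρb φb)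
    (hx : 0 < x) : deriv φb x < 0 :=
  deriv_neg_of_tendsto_lt hsol.2.1.continuousOn (fun _ hy => hsol.hasDerivAt_phi hy)
    (fun _ hy => hsol.deriv_phi_ne_zero hp hμ ha hb hp' hρp hcomp hlt.ne' hy)
    hsol.tendsto_phi (by rwa [hsol.phi_zero]) x hx

theorem deriv_phi_pos (hp : ContDiffOn ℝ 1 p (Ioi 0)) (hμ : 0 < μ) (ha : 0 < a)
    (hb : 0 < b) (hp' : ∀ ρ : ℝ, 0 < ρ → a * μ / b * ρ < deriv p ρ) (hρp : 0 < ρp)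
    (hcomp : a * ρp = b * φp) (hlt : φm < φp) (hsol : IsStatSol p μ a b ρp φp φm ρb φb)
    (hx : 0 < x) : 0 < deriv φb x :=
  deriv_pos_of_tendsto_gt hsol.2.1.continuousOn (fun _ hy => hsol.hasDerivAt_phi hy)
    (fun _ hy => hsol.deriv_phi_ne_zero hp hμ ha hb hp' hρp hcomp hlt.ne hy)
    hsol.tendsto_phi (by rwa [hsol.phi_zero]) x hx

theorem deriv_rho_eq (hp : ContDiffOn ℝ 1 p (Ioi 0)) (hμ : 0 < μ) (ha : 0 < a) (hb : 0 < b)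
    (hp' : ∀ ρ : ℝ, 0 < ρ → a * μ / b * ρ < deriv p ρ) (hsol : IsStatSol p μ a b ρp φp φm ρb φb)
    (hx : 0 < x) : deriv ρb x = deriv φb x / (deriv p (ρb x) / (μ * ρb x)) := by
  rw [hsol.deriv_phi_eq hp hμ.ne' hx,
    mul_div_cancel_left₀ _ (deriv_div_pos hμ ha hb hp' (hsol.rho_pos hx.le)).ne']

end IsStatSol

theorem stmt6_general (p : ℝ → ℝ) (μ a b ρp φp φm ρm : ℝ)
    (hμ : 0 < μ) (ha : 0 < a) (hb : 0 < b)
    (hp3 : ContDiffOn ℝ 3 p (Set.Ioi 0))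
    (hp' : ∀ ρ : ℝ, 0 < ρ → a * μ / b * ρ < deriv p ρ)
    (hρp : 0 < ρp) (hcomp : a * ρp = b * φp)
    (hρm : 0 < ρm) (hFρm : Ffun p μ ρp ρm = φm - φp)
    (ρb φb : ℝ → ℝ) (hsol : IsStatSol p μ a b ρp φp φm ρb φb) :
    ρb 0 = ρm ∧
    (∀ x : ℝ, 0 ≤ x → φb x = Ffun p μ ρp (ρb x) + φp) ∧
    (φp < φm → ∀ x : ℝ, 0 < x →
      deriv ρb x =
        - Real.sqrt (Gfun p μ a b ρp φp (ρb x)) / (deriv p (ρb x) / (μ * ρb x))) ∧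
    (φm < φp → ∀ x : ℝ, 0 < x →
      deriv ρb x =
        Real.sqrt (Gfun p μ a b ρp φp (ρb x)) / (deriv p (ρb x) / (μ * ρb x))) := by
  have hp : ContDiffOn ℝ 1 p (Ioi 0) := hp3.of_le (by norm_num)
  have hsqrt : ∀ x : ℝ, 0 < x → Real.sqrt (Gfun p μ a b ρp φp (ρb x)) = |deriv φb x| :=
    fun x hx => by rw [← hsol.deriv_phi_sq hp hμ.ne' hρp hcomp hx, Real.sqrt_sq_eq_abs]
  refine ⟨hsol.rho_zero hp hμ ha hb hp' hρp hρm hFρm,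
    fun x hx => hsol.phi_eq_Ffun_add hp hμ.ne' hρp hx, fun hlt x hx => ?_, fun hgt x hx => ?_⟩
  · rw [hsqrt x hx, abs_of_neg (hsol.deriv_phi_neg hp hμ ha hb hp' hρp hcomp hlt hx), neg_neg]
    exact hsol.deriv_rho_eq hp hμ ha hb hp' hx
  · rw [hsqrt x hx, abs_of_pos (hsol.deriv_phi_pos hp hμ ha hb hp' hρp hcomp hgt hx)]
    exact hsol.deriv_rho_eq hp hμ ha hb hp' hx

/-- Any classical stationary solution satisfies `ρ̄(0) = ρ₋`, `φ̄ = F(ρ̄) + φ₊`, and the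
first-order equation `ρ̄' = ∓ √(G(ρ̄)) / F'(ρ̄)` according to the sign of `φ₋ - φ₊`. -/
theorem stmt6 (p : ℝ → ℝ) (μ a b ρp φp φm ρm : ℝ)
    (hμ : 0 < μ) (ha : 0 < a) (hb : 0 < b)
    (hp3 : ContDiffOn ℝ 3 p (Set.Ioi 0))
    (hp' : ∀ ρ : ℝ, 0 < ρ → a * μ / b * ρ < deriv p ρ)
    (hρp : 0 < ρp) (hφp : 0 < φp) (hcomp : a * ρp = b * φp)
    (hne : φm ≠ φp) (hint : CondPlus p μ ρp φp φm)
    (hρm : 0 < ρm) (hFρm : Ffun p μ ρp ρm = φm - φp)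
    (ρb φb : ℝ → ℝ) (hsol : IsStatSol p μ a b ρp φp φm ρb φb) :
    ρb 0 = ρm ∧
    (∀ x : ℝ, 0 ≤ x → φb x = Ffun p μ ρp (ρb x) + φp) ∧
    (φp < φm → ∀ x : ℝ, 0 < x →
      deriv ρb x =
        - Real.sqrt (Gfun p μ a b ρp φp (ρb x)) / (deriv p (ρb x) / (μ * ρb x))) ∧
    (φm < φp → ∀ x : ℝ, 0 < x →
      deriv ρb x =
        Real.sqrt (Gfun p μ a b ρp φp (ρb x)) / (deriv p (ρb x) / (μ * ρb x))) :=
  stmt6_general p μ a b ρp φp φm ρm hμ ha hb hp3 hp' hρp hcomp hρm hFρm ρb φb hsol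

end
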